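/- arXiv:2110.13474 — 3 statements merged into one kernel-verified Lean document; each statement's English description precedes it below -/
import Mathlib

section
/- Let v, w ∈ R^n be strictly positive and A ∈ R^{n×n} a nonnegative matrix. Then g*_v(Ax) ≤ g*_w(x) holds for all x ∈ R^n_{≥0} if and only if Aw ≤ v componentwise. -/
/-- Dual copositive norm Lyapunov inequality `g*_v(Ax) ≤ g*_w(x)` on the
nonnegative orthant is equivalent to `A w ≤ v` componentwise. -/
theorem dualNorm_lyap_iff {n : ℕ} (hn : 0 < n) (v w : Fin n → ℝ)
    (hv : ∀ i, 0 < v i) (hw : ∀ i, 0 < w i)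
    (A : Matrix (Fin n) (Fin n) ℝ) (hA : ∀ i j, 0 ≤ A i j) :
    (∀ x : Fin n → ℝ, (∀ i, 0 ≤ x i) →
        (⨆ i, A.mulVec x i / v i) ≤ ⨆ i, x i / w i) ↔
      ∀ i, A.mulVec w i ≤ v i := by
  haveI : Nonempty (Fin n) := ⟨⟨0, hn⟩⟩
  constructor
  · intro h i
    have hx := h w (fun j => (hw j).le)
    have hsup : (⨆ j, w j / w j) = 1 := by
      have : ∀ j, w j / w j = 1 := fun j => div_self (hw j).ne'
      simp [this]
    rw [hsup] at hx
    have hle : A.mulVec w i / v i ≤ 1 :=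
      le_trans (le_ciSup (f := fun j => A.mulVec w j / v j) (Set.Finite.bddAbove (Set.finite_range _)) i) hx
    have := (div_le_one (hv i)).mp hle
    exact this
  · intro h x hx
    set M := ⨆ j, x j / w j with hM
    have hM0 : 0 ≤ M := by
      have : (0:ℝ) ≤ x (Classical.arbitrary (Fin n)) / w (Classical.arbitrary (Fin n)) :=
        div_nonneg (hx _) (hw _).le
      exact this.trans (le_ciSup (f := fun j => x j / w j) (Set.Finite.bddAbove (Set.finite_range _)) _)
    apply ciSup_le
    intro i
    rw [div_le_iff₀ (hv i)]
    have hxw : ∀ j, x j ≤ M * w j := by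
      intro j
      have : x j / w j ≤ M := le_ciSup (f := fun j => x j / w j) (Set.Finite.bddAbove (Set.finite_range _)) j
      calc x j = (x j / w j) * w j := by rw [div_mul_cancel₀ _ (hw j).ne']
        _ ≤ M * w j := mul_le_mul_of_nonneg_right this (hw j).le
    calc A.mulVec x i = ∑ j, A i j * x j := rfl
      _ ≤ ∑ j, A i j * (M * w j) := by
          apply Finset.sum_le_sum
          intro j _
          exact mul_le_mul_of_nonneg_left (hxw j) (hA i j)
      _ = M * ∑ j, A i j * w j := by
          rw [Finset.mul_sum]; congr 1; ext j; ring
      _ = M * A.mulVec w i := rfl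
      _ ≤ M * v i := mul_le_mul_of_nonneg_left (h i) hM0
end

section
/- Let f₁, f₂ be norms on R^n. Then the unit ball of f₁+f₂ equals the inverse sum of the unit balls: B_{f₁+f₂} = ⋃_{λ∈[0,1]} (λ B_{f₁} ∩ (1−λ) B_{f₂}). -/
open Pointwise

/-- The unit ball of the sum of two norms is the inverse sum of the unit
balls: `B_{f₁+f₂} = ⋃_{λ ∈ [0,1]} (λ B_{f₁} ∩ (1-λ) B_{f₂})`. -/
theorem ball_add_eq_inverse_sum {n : ℕ} (f₁ f₂ : (Fin n → ℝ) → ℝ)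
    (h₁add : ∀ x y, f₁ (x + y) ≤ f₁ x + f₁ y)
    (h₁smul : ∀ (c : ℝ) (x), f₁ (c • x) = |c| * f₁ x)
    (h₁def : ∀ x, f₁ x = 0 ↔ x = 0)
    (h₂add : ∀ x y, f₂ (x + y) ≤ f₂ x + f₂ y)
    (h₂smul : ∀ (c : ℝ) (x), f₂ (c • x) = |c| * f₂ x)
    (h₂def : ∀ x, f₂ x = 0 ↔ x = 0) :
    {x : Fin n → ℝ | f₁ x + f₂ x ≤ 1} =
      ⋃ l ∈ Set.Icc (0 : ℝ) 1,
        (l • {x : Fin n → ℝ | f₁ x ≤ 1}) ∩ ((1 - l) • {x : Fin n → ℝ | f₂ x ≤ 1}) := by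
  have nonneg : ∀ (f : (Fin n → ℝ) → ℝ), (∀ x y, f (x + y) ≤ f x + f y) →
      (∀ (c : ℝ) (x), f (c • x) = |c| * f x) → ∀ x, 0 ≤ f x := by
    intro f hadd hsmul x
    have h0 : f 0 = 0 := by simpa using hsmul 0 0
    have hneg : f (-x) = f x := by simpa using hsmul (-1) x
    have h := hadd x (-x)
    simp [h0, hneg] at h
    linarith
  have n1 := nonneg f₁ h₁add h₁smul
  have n2 := nonneg f₂ h₂add h₂smul
  have f10 : f₁ 0 = 0 := (h₁def 0).2 rfl
  have f20 : f₂ 0 = 0 := (h₂def 0).2 rfl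
  ext x
  simp only [Set.mem_setOf_eq, Set.mem_iUnion, Set.mem_inter_iff, Set.mem_Icc, exists_prop]
  constructor
  · intro hx
    refine ⟨f₁ x, ⟨n1 x, by nlinarith [n2 x]⟩, ?_, ?_⟩
    · rcases eq_or_lt_of_le (n1 x) with h | h
      · have hx0 : x = 0 := (h₁def x).1 h.symm
        exact Set.mem_smul_set.mpr ⟨0, by simp [f10], by simp [hx0]⟩
      · refine Set.mem_smul_set.mpr ⟨(f₁ x)⁻¹ • x, ?_, ?_⟩
        · simp only [Set.mem_setOf_eq, h₁smul, abs_of_pos (inv_pos.mpr h)]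
          rw [inv_mul_cancel₀ (ne_of_gt h)]
        · rw [smul_smul, mul_inv_cancel₀ (ne_of_gt h), one_smul]
    · have hpos : 0 < 1 - f₁ x := by
        rcases eq_or_lt_of_le (n2 x) with h | h
        · have hx0 : x = 0 := (h₂def x).1 h.symm
          simp [hx0, f10]
        · nlinarith
      refine Set.mem_smul_set.mpr ⟨(1 - f₁ x)⁻¹ • x, ?_, ?_⟩
      · simp only [Set.mem_setOf_eq, h₂smul, abs_of_pos (inv_pos.mpr hpos)]
        rw [inv_mul_le_iff₀ hpos]
        linarith
      · rw [smul_smul, mul_inv_cancel₀ (ne_of_gt hpos), one_smul]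
  · rintro ⟨l, ⟨hl0, hl1⟩, h1, h2⟩
    obtain ⟨a, ha, rfl⟩ := Set.mem_smul_set.mp h1
    obtain ⟨b, hb, hab⟩ := Set.mem_smul_set.mp h2
    have e1 : f₁ (l • a) ≤ l := by
      rw [h₁smul, abs_of_nonneg hl0]
      exact mul_le_of_le_one_right hl0 ha
    have e2 : f₂ (l • a) ≤ 1 - l := by
      rw [← hab, h₂smul, abs_of_nonneg (by linarith : (0:ℝ) ≤ 1 - l)]
      exact mul_le_of_le_one_right (by linarith) hb
    linarith
end

section
/- Let A₁,…,A_M ∈ R^{n×n} be nonnegative matrices, l ≥ 1, γ > 0, and v ∈ R^n strictly positive such that A_{i_l}⋯A_{i_1} v ≤ γ^l v componentwise for every word (i₁,…,i_l) ∈ {1,…,M}^l. For each word a = (i₁,…,i_{l−1}) of length l−1 define v_a := v + γ^{−1} A_{i_{l−1}} v + γ^{−2} A_{i_{l−1}}A_{i_{l−2}} v + ⋯ + γ^{−(l−1)} A_{i_{l−1}}⋯A_{i_1} v. Then each v_a is strictly positive and for every word a = (i₁,…,i_{l−1}) and every j ∈ {1,…,M}, A_j v_a ≤ γ · v_b componentwise,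 where b = (i₂,…,i_{l−1},j). -/
/-!
Prepending a letter gives the recursion `v_{j a} = v + γ⁻¹ A_j v_a`, so `A_j v_a = γ (v_{j a} - v)`
and positivity of `v_a` follows from `v ≤ v_a`. Deleting the oldest letter of the length-`l` word
`j a` removes from `v_{j a}` only its last summand `γ^{-l} A_j A_a v`, which is at most `v` by the
decay hypothesis; hence `v_{j a} - v ≤ v_b` for the De Bruijn successor `b`.
-/

/-- `wordApply A [i_l, …, i_1] x = A_{i_l} ⋯ A_{i_1} x`. -/
def wordApply {n M : ℕ} (A : Fin M → Matrix (Fin n) (Fin n) ℝ) :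
    List (Fin M) → (Fin n → ℝ) → Fin n → ℝ
  | [], x => x
  | i :: rest, x => (A i).mulVec (wordApply A rest x)

/-- For a word `a = (i₁, …, i_{l-1})`, represented by the list
`[i_{l-1}, …, i₁]`, the node function
`v_a = v + γ⁻¹ A_{i_{l-1}} v + ⋯ + γ^{-(l-1)} A_{i_{l-1}} ⋯ A_{i_1} v`. -/
noncomputable def vDB {n M : ℕ} (A : Fin M → Matrix (Fin n) (Fin n) ℝ) (γ : ℝ)
    (v : Fin n → ℝ) (a : List (Fin M)) : Fin n → ℝ :=
  fun idx => ∑ k ∈ Finset.range (a.length + 1),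
    (γ ^ k)⁻¹ * wordApply A (a.take k) v idx

open Finset Matrix

theorem Matrix.mulVec_nonneg {ι κ R : Type*} [Fintype κ] [Semiring R] [PartialOrder R]
    [IsOrderedRing R] {B : Matrix ι κ R} (hB : ∀ i j, 0 ≤ B i j) {x : κ → R} (hx : 0 ≤ x) :
    0 ≤ B *ᵥ x :=
  fun i => sum_nonneg fun j _ => mul_nonneg (hB i j) (hx j)

section vDB

variable {n M : ℕ} (A : Fin M → Matrix (Fin n) (Fin n) ℝ) (γ : ℝ) (v : Fin n → ℝ)

theorem vDB_eq_sum (a : List (Fin M)) :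
    vDB A γ v a = ∑ k ∈ range (a.length + 1), (γ ^ k)⁻¹ • wordApply A (a.take k) v := by
  ext idx
  simp only [vDB, Finset.sum_apply, Pi.smul_apply, smul_eq_mul]

theorem vDB_nil : vDB A γ v [] = v := by
  simp [vDB_eq_sum, wordApply]

theorem vDB_cons (j : Fin M) (a : List (Fin M)) :
    vDB A γ v (j :: a) = v + γ⁻¹ • A j *ᵥ vDB A γ v a := by
  rw [vDB_eq_sum, vDB_eq_sum, List.length_cons, sum_range_succ', mulVec_sum, smul_sum, add_comm]
  simp only [List.take_succ_cons, List.take_zero, wordApply, pow_zero, inv_one, one_smul,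
    mulVec_smul, smul_smul, pow_succ, mul_inv, mul_comm]

theorem vDB_eq_vDB_dropLast_add {c : List (Fin M)} (hc : c ≠ []) :
    vDB A γ v c = vDB A γ v c.dropLast + (γ ^ c.length)⁻¹ • wordApply A c v := by
  have hlen : c.dropLast.length + 1 = c.length := by
    rw [List.length_dropLast]; exact Nat.sub_add_cancel (List.length_pos_iff.2 hc)
  rw [vDB_eq_sum, vDB_eq_sum, sum_range_succ, List.take_length, hlen]
  congr 1
  refine sum_congr rfl fun k hk => ?_
  rw [List.dropLast_eq_take, List.take_take, min_eq_left (by grind)]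

theorem le_vDB (hA : ∀ m i j, 0 ≤ A m i j) (hγ : 0 ≤ γ) (hv : 0 ≤ v) (a : List (Fin M)) :
    v ≤ vDB A γ v a := by
  induction a with
  | nil => rw [vDB_nil]
  | cons i a ih =>
    rw [vDB_cons]
    exact le_add_of_nonneg_right (smul_nonneg (inv_nonneg.2 hγ) (mulVec_nonneg (hA i) (hv.trans ih)))

theorem mulVec_vDB (hγ : γ ≠ 0) (j : Fin M) (a : List (Fin M)) :
    A j *ᵥ vDB A γ v a = γ • (vDB A γ v (j :: a) - v) := by
  rw [vDB_cons, add_sub_cancel_left, smul_smul, mul_inv_cancel₀ hγ, one_smul]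

theorem vDB_le_vDB_dropLast_add (hγ : 0 < γ) {c : List (Fin M)} (hc : c ≠ [])
    (hword : wordApply A c v ≤ γ ^ c.length • v) :
    vDB A γ v c ≤ vDB A γ v c.dropLast + v := by
  rw [vDB_eq_vDB_dropLast_add A γ v hc]
  gcongr
  exact (inv_smul_le_iff_of_pos (pow_pos hγ _)).2 hword

end vDB

/-- The De Bruijn successor `(i₂, …, i_{l-1}, j)` of `a = [i_{l-1}, …, i₁]` is `j :: a.dropLast`. -/
theorem deBruijn_construction_general {n M l : ℕ}
    (A : Fin M → Matrix (Fin n) (Fin n) ℝ) (hA : ∀ m i j, 0 ≤ A m i j)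
    (γ : ℝ) (hγ : 0 < γ) (v : Fin n → ℝ) (hv : ∀ i, 0 < v i)
    (hword : ∀ w : List (Fin M), w.length = l →
      ∀ idx, wordApply A w v idx ≤ γ ^ l * v idx) :
    ∀ a : List (Fin M), a.length = l - 1 →
      (∀ idx, 0 < vDB A γ v a idx) ∧
      (∀ j : Fin M, ∀ idx,
        (A j).mulVec (vDB A γ v a) idx ≤ γ * vDB A γ v (j :: a.dropLast) idx) := by
  intro a ha
  have hv₀ : 0 ≤ v := fun i => (hv i).le
  refine ⟨fun idx => (hv idx).trans_le (le_vDB A γ v hA hγ.le hv₀ a idx), fun j idx => ?_⟩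
  have hshift : vDB A γ v (j :: a) ≤ vDB A γ v (j :: a.dropLast) + v := by
    rcases eq_or_ne a [] with rfl | ha₀
    · exact le_add_of_nonneg_right hv₀
    · have hlen : (j :: a).length = l := by
        have := List.length_pos_iff.2 ha₀
        simp only [List.length_cons]; omega
      rw [← List.dropLast_cons_of_ne_nil ha₀]
      refine vDB_le_vDB_dropLast_add A γ v hγ (List.cons_ne_nil j a) fun idx => ?_
      simpa only [hlen, Pi.smul_apply, smul_eq_mul] using hword _ hlen idx
  rw [mulVec_vDB A γ v hγ.ne']
  simp only [Pi.smul_apply, Pi.sub_apply, smul_eq_mul]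
  exact mul_le_mul_of_nonneg_left (sub_le_iff_le_add.2 (hshift idx)) hγ.le

/-- If `g*_v` decays with rate `γ^l` along every product of length `l`, then
the functions `v_a` indexed by words of length `l-1` (words
`a = (i₁, …, i_{l-1})` are represented as lists `[i_{l-1}, …, i₁]`; the De
Bruijn successor `(i₂, …, i_{l-1}, j)` is then `j :: a.dropLast`) are strictly
positive and satisfy the De Bruijn dual-copositive Lyapunov inequalities with
rate `γ`. -/
theorem deBruijn_construction {n M l : ℕ} (hl : 1 ≤ l)
    (A : Fin M → Matrix (Fin n) (Fin n) ℝ) (hA : ∀ m i j, 0 ≤ A m i j)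
    (γ : ℝ) (hγ : 0 < γ) (v : Fin n → ℝ) (hv : ∀ i, 0 < v i)
    (hword : ∀ w : List (Fin M), w.length = l →
      ∀ idx, wordApply A w v idx ≤ γ ^ l * v idx) :
    ∀ a : List (Fin M), a.length = l - 1 →
      (∀ idx, 0 < vDB A γ v a idx) ∧
      (∀ j : Fin M, ∀ idx,
        (A j).mulVec (vDB A γ v a) idx ≤ γ * vDB A γ v (j :: a.dropLast) idx) :=
  deBruijn_construction_general A hA γ hγ v hv hword
end
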